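/- Let 1 → R → F →π→ G → 1 be a periodic presentation of a finite group G and for each k ≥ 1 set E_k = F/[R,_kF] (each E_k is finite). Then for every k ≥ 1: [R,_kF] ⊆ [F,F]; the kernel [R,_kF]/[R,_{k+1}F] of the canonical surjection E_{k+1} → E_k is central in E_{k+1}, is contained in the commutator subgroup [E_{k+1},E_{k+1}], and is isomorphic to H₂(E_k;ℤ); and for each free generator f_i its images in E_{k+1} and in E_k both have order exactly m_i. In other words, E_{k+1} is a locally unitary Schur cover of E_k. -/

import Mathlib

/-- The free product `⟨f₁⟩ ∗ ⋯ ∗ ⟨f_d⟩` of cyclic groups, the `i`-th factor being cyclic of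
order `m i` (with `m i = 0` corresponding to an infinite cyclic factor, since `ZMod 0 = ℤ`). -/
abbrev FreeProdCyclic {ι : Type*} (m : ι → ℕ) : Type _ :=
  Monoid.CoprodI (fun i : ι => Multiplicative (ZMod (m i)))

/-- The distinguished generator `fᵢ` of the `i`-th cyclic free factor. -/
def cyclicGen {ι : Type*} (m : ι → ℕ) (i : ι) : FreeProdCyclic m :=
  Monoid.CoprodI.of (Multiplicative.ofAdd (1 : ZMod (m i)))

/-- The quotient `([F,F] ⊓ R) / [R,F]` appearing in the Hopf formula. -/
abbrev hopfQuotient {F : Type*} [Group F] (R : Subgroup F) : Type _ :=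
  ↥(⁅(⊤ : Subgroup F), (⊤ : Subgroup F)⁆ ⊓ R) ⧸
    ((⁅R, (⊤ : Subgroup F)⁆).subgroupOf (⁅(⊤ : Subgroup F), (⊤ : Subgroup F)⁆ ⊓ R))

instance hopfQuotient_normal {F : Type*} [Group F] (R : Subgroup F) [R.Normal] :
    ((⁅R, (⊤ : Subgroup F)⁆).subgroupOf
      (⁅(⊤ : Subgroup F), (⊤ : Subgroup F)⁆ ⊓ R)).Normal :=
  Subgroup.Normal.subgroupOf inferInstance _

/-- The second integral homology `H₂(G;ℤ)` of a group `G`, realized via the Hopf formula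
`H₂(G;ℤ) ≅ ([F,F] ⊓ R)/[R,F]` applied to the canonical presentation `1 → R → F → G → 1`
of `G` by the free group `F` on the underlying set of `G` (with projection `F → G`
induced by the identity map, whose kernel is `R`). -/
abbrev H2Z (G : Type*) [Group G] : Type _ :=
  hopfQuotient (MonoidHom.ker (FreeGroup.lift (id : G → G)))

/-- Iterated commutator subgroups: `[R,₀F] = R` and `[R,_{k+1}F] = [[R,_kF],F]`. -/
def iterComm {F : Type*} [Group F] (R : Subgroup F) : ℕ → Subgroup F
  | 0 => R
  | k + 1 => ⁅iterComm R k, (⊤ : Subgroup F)⁆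

instance iterComm_normal {F : Type*} [Group F] (R : Subgroup F) [hR : R.Normal] (k : ℕ) :
    (iterComm R k).Normal := by
  induction k with
  | zero => exact hR
  | succ k ih => exact @Subgroup.commutator_normal _ _ _ _ ih _

/-- The transition homomorphism `F/[R,_{k+1}F] →* F/[R,_kF]`. -/
def iterCommTrans {F : Type*} [Group F] (R : Subgroup F) [R.Normal] (k : ℕ) :
    F ⧸ iterComm R (k + 1) →* F ⧸ iterComm R k :=
  QuotientGroup.map _ _ (MonoidHom.id F)
    (by simpa [iterComm] using Subgroup.commutator_le_left (iterComm R k) (⊤ : Subgroup F))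

/-!
STATEMENT 13: Let `1 → R → F →π→ G → 1` be a periodic presentation of a finite group `G`
and for each `k ≥ 1` set `E_k = F/[R,_kF]` (each `E_k` is finite).  Then for every
`k ≥ 1`: `[R,_kF] ⊆ [F,F]`; the kernel `[R,_kF]/[R,_{k+1}F]` of the canonical surjection
`E_{k+1} → E_k` is central in `E_{k+1}`, is contained in the commutator subgroup
`[E_{k+1},E_{k+1}]`, and is isomorphic to `H₂(E_k;ℤ)`; and for each free generator `fᵢ`
its images in `E_{k+1}` and in `E_k` both have order exactly `mᵢ`.  In other words,
`E_{k+1}` is a locally unitary Schur cover of `E_k`.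
-/

/-!
Write `S = [R,_kF]` and `Φ = FreeGroup (Fin d)`, which presents `F` with relators `fᵢ ^ mᵢ`.

Modulo `[S,F]` the image of `S` is central of finite index, so by Schur the commutator subgroup
of `F/[S,F]` is finite; its abelianization is generated by finitely many elements of finite
order, hence finite too. By induction every `E_k` is finite.

The Hopf quotient `([Φ,Φ] ∩ N)/[N,Φ]` of a free presentation `Φ/N` does not depend on the
presentation, since lifts in both directions induce mutually inverse maps. For the presentation of
`F` it is trivial: modulo `[N,Φ]` the relators are central, so they generate the image of `N`, and
they abelianize to the independent vectors `mᵢ eᵢ`. Pulling `S` back to `Φ` therefore identifies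
`H₂(F/S)` with `([F,F] ∩ S)/[S,F] = S/[S,F]` when `S ≤ [F,F]`, and `S/[S,F]` is the kernel of
`E_{k+1} → E_k`. Generators keep their orders because `F/[F,F]` surjects onto each `ℤ/mᵢ`.
-/

open Subgroup
open scoped commutatorElement

section Commutator

variable {F G : Type*} [Group F] [Group G]

theorem mk_mem_center_of_mem (S : Subgroup F) [S.Normal] {s : F} (hs : s ∈ S) :
    (QuotientGroup.mk s : F ⧸ ⁅S, (⊤ : Subgroup F)⁆) ∈ center (F ⧸ ⁅S, (⊤ : Subgroup F)⁆) := by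
  rw [mem_center_iff]
  intro z
  induction z using QuotientGroup.induction_on with
  | H f =>
    rw [← QuotientGroup.mk_mul, ← QuotientGroup.mk_mul, QuotientGroup.eq]
    convert commutator_mem_commutator (inv_mem hs) (mem_top f⁻¹) using 1
    simp [commutatorElement_def, mul_assoc]

theorem map_mk_le_center (S : Subgroup F) [S.Normal] :
    map (QuotientGroup.mk' ⁅S, ⊤⁆) S ≤ center (F ⧸ ⁅S, ⊤⁆) := by
  rintro _ ⟨s, hs, rfl⟩
  exact mk_mem_center_of_mem S hs

theorem normal_of_le_center {K : Subgroup F} (h : K ≤ center F) : K.Normal :=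
  ⟨fun n hn g => by rwa [mem_center_iff.mp (h hn) g, mul_inv_cancel_right]⟩

theorem commutator_top_le_comap {S : Subgroup F} {T : Subgroup G} (φ : F →* G)
    (h : S ≤ comap φ T) : ⁅S, ⊤⁆ ≤ comap φ ⁅T, ⊤⁆ := by
  rw [← map_le_iff_le_comap, map_commutator]
  exact commutator_mono (map_le_iff_le_comap.mpr h) le_top

theorem commutatorElement_mul_central_left {a b z : F} (hz : z ∈ center F) :
    ⁅a * z, b⁆ = ⁅a, b⁆ := by
  have hzb : z * b = b * z := (mem_center_iff.mp hz b).symm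
  simp only [commutatorElement_def, mul_inv_rev, mul_assoc]
  rw [← mul_assoc z b, hzb]
  group

theorem commutatorElement_mul_central_right {a b z : F} (hz : z ∈ center F) :
    ⁅a, b * z⁆ = ⁅a, b⁆ := by
  rw [← commutatorElement_inv, commutatorElement_mul_central_left hz, commutatorElement_inv]

end Commutator

section Finiteness

variable {Q : Type*} [Group Q]

theorem finite_commutatorSet_of_finiteIndex_center [(center Q).FiniteIndex] :
    Finite (commutatorSet Q) := by
  refine Set.Finite.to_subtype <| (Set.finite_range fun p : (Q ⧸ center Q) × (Q ⧸ center Q) =>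
    ⁅p.1.out, p.2.out⁆).subset ?_
  rintro _ ⟨g₁, g₂, rfl⟩
  obtain ⟨z₁, hz₁⟩ := QuotientGroup.mk_out_eq_mul (center Q) g₁
  obtain ⟨z₂, hz₂⟩ := QuotientGroup.mk_out_eq_mul (center Q) g₂
  refine ⟨(g₁, g₂), ?_⟩
  simp only [hz₁, hz₂, commutatorElement_mul_central_left z₁.2,
    commutatorElement_mul_central_right z₂.2]

theorem finite_of_finiteIndex_center [(center Q).FiniteIndex] {s : Set Q} (hs : s.Finite)
    (hgen : closure s = ⊤) (htors : ∀ x ∈ s, IsOfFinOrder x) : Finite Q := by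
  have := finite_commutatorSet_of_finiteIndex_center (Q := Q)
  have hgen' : closure (Abelianization.of '' s) = ⊤ := by
    rw [← MonoidHom.map_closure, hgen, map_top_of_surjective _ QuotientGroup.mk_surjective]
  have : Group.FG (Abelianization Q) := Group.fg_iff.mpr ⟨_, hgen', hs.image _⟩
  have hab : Finite (Abelianization Q) := by
    refine CommGroup.finite_of_fg_isMulTorsion _ fun x => ?_
    refine (closure_le (CommGroup.torsion _)).mpr ?_ (hgen' ▸ mem_top x)
    rintro _ ⟨y, hy, rfl⟩
    exact MonoidHom.isOfFinOrder _ (htors y hy)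
  have : Finite (Q ⧸ commutator Q) := hab
  exact Finite.of_equiv _ (groupEquivQuotientProdSubgroup (s := commutator Q)).symm

variable {F : Type*} [Group F] {s : Set F} (hs : s.Finite) (hgen : closure s = ⊤)
  (htors : ∀ x ∈ s, IsOfFinOrder x)
include hs hgen htors

theorem finite_quotient_commutator_top (S : Subgroup F) [S.Normal] [Finite (F ⧸ S)] :
    Finite (F ⧸ ⁅S, (⊤ : Subgroup F)⁆) := by
  set μ := QuotientGroup.mk' ⁅S, (⊤ : Subgroup F)⁆
  have : S.FiniteIndex := finiteIndex_of_finite_quotient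
  have : (map μ S).FiniteIndex := ⟨by
    rw [index_map_eq S (QuotientGroup.mk'_surjective _)
      (by rw [QuotientGroup.ker_mk']; exact commutator_le_left S ⊤)]
    exact FiniteIndex.index_ne_zero⟩
  have : (center (F ⧸ ⁅S, (⊤ : Subgroup F)⁆)).FiniteIndex :=
    finiteIndex_of_le (map_mk_le_center S)
  refine finite_of_finiteIndex_center (hs.image μ) ?_ ?_
  · rw [← MonoidHom.map_closure, hgen, map_top_of_surjective _ (QuotientGroup.mk'_surjective _)]
  · rintro _ ⟨x, hx, rfl⟩
    exact μ.isOfFinOrder (htors x hx)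

theorem finite_quotient_iterComm (R : Subgroup F) [R.Normal] [Finite (F ⧸ R)] (k : ℕ) :
    Finite (F ⧸ iterComm R k) := by
  induction k with
  | zero => assumption
  | succ k ih => exact finite_quotient_commutator_top hs hgen htors (iterComm R k)

end Finiteness

section HopfQuotient

variable {F G : Type*} [Group F] [Group G]

theorem mul_inv_mem_commutator_top {S : Subgroup G} [S.Normal] {θ : G →* G}
    (h : ∀ y, θ y * y⁻¹ ∈ S) {x : G} (hx : x ∈ commutator G) :
    θ x * x⁻¹ ∈ ⁅S, (⊤ : Subgroup G)⁆ := by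
  set μ := QuotientGroup.mk' ⁅S, (⊤ : Subgroup G)⁆
  have hc : ∀ y, μ (θ y * y⁻¹) ∈ center (G ⧸ ⁅S, (⊤ : Subgroup G)⁆) :=
    fun y => mk_mem_center_of_mem S (h y)
  -- modulo `⁅S, ⊤⁆` the map `y ↦ θ y * y⁻¹` is a homomorphism with central values
  let δ : G →* G ⧸ ⁅S, (⊤ : Subgroup G)⁆ :=
    { toFun := fun y => μ (θ y * y⁻¹)
      map_one' := by simp
      map_mul' := fun a b => by
        have hb := mem_center_iff.mp (hc b) (μ a)⁻¹
        simp only [map_mul, map_inv, mul_inv_rev] at hb ⊢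
        rw [mul_assoc (μ (θ a)) (μ a)⁻¹, hb]
        group }
  have hδ : commutator G ≤ δ.ker := by
    rw [_root_.commutator_def, commutator_le]
    intro a _ b _
    rw [MonoidHom.mem_ker, map_commutatorElement, commutatorElement_eq_one_iff_commute]
    exact mem_center_iff.mp (hc b) (δ a)
  rw [← QuotientGroup.ker_mk' ⁅S, (⊤ : Subgroup G)⁆]
  exact hδ hx

variable (S₁ : Subgroup F) (S₂ : Subgroup G) [S₁.Normal] [S₂.Normal]

def hopfMap (φ : F →* G) (h : S₁ ≤ comap φ S₂) : hopfQuotient S₁ →* hopfQuotient S₂ :=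
  QuotientGroup.map _ _
    ((φ.domRestrict (⁅⊤, ⊤⁆ ⊓ S₁)).codRestrict (⁅⊤, ⊤⁆ ⊓ S₂) fun x => mem_inf.mpr
      ⟨commutator_top_le_comap φ (comap_top φ).ge (mem_inf.mp x.2).1, h (mem_inf.mp x.2).2⟩)
    fun _ hy => commutator_top_le_comap φ h (mem_subgroupOf.mp hy)

theorem hopfMap_comp_hopfMap {φ : F →* G} {ψ : G →* F} (hφ : S₁ ≤ comap φ S₂)
    (hψ : S₂ ≤ comap ψ S₁) (hψφ : ∀ x, ψ (φ x) * x⁻¹ ∈ S₁) :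
    (hopfMap S₂ S₁ ψ hψ).comp (hopfMap S₁ S₂ φ hφ) = MonoidHom.id _ := by
  refine QuotientGroup.monoidHom_ext _ <|
    MonoidHom.ext fun (x : ↥(⁅(⊤ : Subgroup F), ⊤⁆ ⊓ S₁)) => ?_
  refine QuotientGroup.eq.mpr (mem_subgroupOf.mpr ?_)
  have h := inv_mem (mul_inv_mem_commutator_top (θ := ψ.comp φ) hψφ (mem_inf.mp x.2).1)
  rw [mul_inv_rev, inv_inv] at h
  exact (inferInstance : ⁅S₁, (⊤ : Subgroup F)⁆.Normal).mem_comm h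

def hopfQuotientEquivOfLifts {E : Type*} [Group E] {p₁ : F →* E} {p₂ : G →* E} (φ : F →* G)
    (ψ : G →* F) (hφ : p₂.comp φ = p₁) (hψ : p₁.comp ψ = p₂) :
    hopfQuotient p₁.ker ≃* hopfQuotient p₂.ker :=
  have hφker : p₁.ker ≤ comap φ p₂.ker := by rw [MonoidHom.comap_ker, hφ]
  have hψker : p₂.ker ≤ comap ψ p₁.ker := by rw [MonoidHom.comap_ker, hψ]
  MonoidHom.toMulEquiv (hopfMap _ _ φ hφker) (hopfMap _ _ ψ hψker)
    (hopfMap_comp_hopfMap _ _ hφker hψker fun x => by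
      rw [MonoidHom.mem_ker, map_mul, map_inv, ← MonoidHom.comp_apply p₁ ψ, hψ,
        ← MonoidHom.comp_apply, hφ, mul_inv_cancel])
    (hopfMap_comp_hopfMap _ _ hψker hφker fun x => by
      rw [MonoidHom.mem_ker, map_mul, map_inv, ← MonoidHom.comp_apply p₂ φ, hφ,
        ← MonoidHom.comp_apply, hψ, mul_inv_cancel])

theorem nonempty_hopfQuotient_equiv_of_free {X Y E : Type*} [Group E] {p₁ : FreeGroup X →* E}
    {p₂ : FreeGroup Y →* E} (h₁ : Function.Surjective p₁) (h₂ : Function.Surjective p₂) :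
    Nonempty (hopfQuotient p₁.ker ≃* hopfQuotient p₂.ker) :=
  ⟨hopfQuotientEquivOfLifts (FreeGroup.lift fun x => Function.surjInv h₂ (p₁ (.of x)))
    (FreeGroup.lift fun y => Function.surjInv h₁ (p₂ (.of y)))
    (FreeGroup.ext_hom _ _ fun _ => by simp [Function.surjInv_eq])
    (FreeGroup.ext_hom _ _ fun _ => by simp [Function.surjInv_eq])⟩

theorem hopfMap_bijective_of_eq_comap {L : F →* G} (hL : Function.Surjective L)
    (htriv : commutator F ⊓ L.ker ≤ ⁅L.ker, ⊤⁆) {S : Subgroup G} [S.Normal] {T : Subgroup F}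
    [T.Normal] (hT : T = comap L S) : Function.Bijective (hopfMap T S L hT.le) := by
  subst hT
  constructor
  · refine (injective_iff_map_eq_one _).mpr fun x hx => ?_
    induction x using QuotientGroup.induction_on with
    | H x =>
      change (QuotientGroup.mk _ : hopfQuotient S) = 1 at hx
      rw [QuotientGroup.eq_one_iff, mem_subgroupOf] at hx ⊢
      have hmap : ⁅S, ⊤⁆ = map L ⁅comap L S, ⊤⁆ := by
        rw [map_commutator, map_comap_eq_self_of_surjective hL, map_top_of_surjective L hL]
      obtain ⟨y, hy, hyx⟩ := mem_map.mp (hmap.le hx)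
      have hker : y⁻¹ * (x : F) ∈ commutator F ⊓ L.ker := mem_inf.mpr
        ⟨mul_mem (inv_mem (commutator_mono le_top le_rfl hy)) (mem_inf.mp x.2).1, by simp [hyx]⟩
      simpa using mul_mem hy (commutator_mono (L.ker_le_comap S) le_rfl (htriv hker))
  · intro z
    induction z using QuotientGroup.induction_on with
    | H z =>
      have hcomm : ⁅(⊤ : Subgroup G), ⊤⁆ = map L ⁅(⊤ : Subgroup F), ⊤⁆ := by
        rw [map_commutator, map_top_of_surjective L hL]
      obtain ⟨x, hx, hxz⟩ := mem_map.mp (hcomm.le (mem_inf.mp z.2).1)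
      refine ⟨QuotientGroup.mk ⟨x, mem_inf.mpr ⟨hx, ?_⟩⟩, congrArg _ (Subtype.ext hxz)⟩
      exact mem_comap.mpr (hxz ▸ (mem_inf.mp z.2).2)

noncomputable def hopfQuotientEquivMapMk {S : Subgroup G} [S.Normal] (hS : S ≤ commutator G) :
    hopfQuotient S ≃* map (QuotientGroup.mk' ⁅S, ⊤⁆) S :=
  let f := ((QuotientGroup.mk' ⁅S, ⊤⁆).domRestrict (⁅⊤, ⊤⁆ ⊓ S)).codRestrict
    (map (QuotientGroup.mk' ⁅S, ⊤⁆) S) fun x => mem_map_of_mem _ (mem_inf.mp x.2).2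
  have hf : Function.Surjective f := by
    rintro ⟨y, hy⟩
    obtain ⟨s, hs, rfl⟩ := mem_map.mp hy
    exact ⟨⟨s, mem_inf.mpr ⟨hS hs, hs⟩⟩, rfl⟩
  have hker : f.ker = (⁅S, ⊤⁆ : Subgroup G).subgroupOf (⁅⊤, ⊤⁆ ⊓ S) := by
    ext x
    rw [MonoidHom.mem_ker, mem_subgroupOf, ← Subtype.val_inj]
    exact QuotientGroup.eq_one_iff _
  (QuotientGroup.quotientMulEquivOfEq hker.symm).trans
    (QuotientGroup.quotientKerEquivOfSurjective f hf)

theorem nonempty_map_mk_equiv_H2Z {X : Type*} {L : FreeGroup X →* G}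
    (hL : Function.Surjective L) (htriv : commutator (FreeGroup X) ⊓ L.ker ≤ ⁅L.ker, ⊤⁆)
    {S : Subgroup G} [S.Normal] (hS : S ≤ commutator G) :
    Nonempty (map (QuotientGroup.mk' ⁅S, ⊤⁆) S ≃* H2Z (G ⧸ S)) := by
  obtain ⟨e⟩ := nonempty_hopfQuotient_equiv_of_free (p₁ := (QuotientGroup.mk' S).comp L)
    (p₂ := FreeGroup.lift (id : G ⧸ S → G ⧸ S)) ((QuotientGroup.mk'_surjective S).comp hL)
    fun g => ⟨.of g, FreeGroup.lift_apply_of⟩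
  have hT : ((QuotientGroup.mk' S).comp L).ker = comap L S := by
    rw [← MonoidHom.comap_ker, QuotientGroup.ker_mk']
  exact ⟨(hopfQuotientEquivMapMk hS).symm.trans
    ((MulEquiv.ofBijective _ (hopfMap_bijective_of_eq_comap hL htriv hT)).symm.trans e)⟩

end HopfQuotient

section Relators

variable {Φ ι : Type*} [Group Φ]

theorem map_mk_normalClosure_le_closure (r : ι → Φ) :
    map (QuotientGroup.mk' ⁅normalClosure (Set.range r), ⊤⁆) (normalClosure (Set.range r)) ≤
      closure (Set.range (QuotientGroup.mk' ⁅normalClosure (Set.range r), ⊤⁆ ∘ r)) := by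
  set N := normalClosure (Set.range r)
  have hcentral : closure (Set.range (QuotientGroup.mk' ⁅N, ⊤⁆ ∘ r)) ≤ center _ := by
    rw [closure_le]
    rintro _ ⟨i, rfl⟩
    exact mk_mem_center_of_mem N (subset_normalClosure ⟨i, rfl⟩)
  have := normal_of_le_center hcentral
  rw [map_normalClosure _ _ (QuotientGroup.mk'_surjective _), ← Set.range_comp]
  exact normalClosure_le_normal subset_closure

open scoped IsMulCommutative in
theorem commutator_inf_normalClosure_pow_le [Fintype ι] {m : ι → ℕ} (hm : ∀ i, m i ≠ 0) :
    commutator (FreeGroup ι) ⊓ normalClosure (Set.range fun i => FreeGroup.of i ^ m i) ≤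
      ⁅normalClosure (Set.range fun i => FreeGroup.of i ^ m i), ⊤⁆ := by
  classical
  set r : ι → FreeGroup ι := fun i => FreeGroup.of i ^ m i
  set N := normalClosure (Set.range r)
  set μ := QuotientGroup.mk' ⁅N, (⊤ : Subgroup (FreeGroup ι))⁆
  intro x hx
  obtain ⟨hxc, hxN⟩ := mem_inf.mp hx
  let z : ι → center (FreeGroup ι ⧸ ⁅N, ⊤⁆) := fun i =>
    ⟨μ (r i), mk_mem_center_of_mem N (subset_normalClosure ⟨i, rfl⟩)⟩
  obtain ⟨w, hw, hwx⟩ : μ x ∈ map (center _).subtype (closure (Set.range z)) := by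
    rw [MonoidHom.map_closure, ← Set.range_comp]
    exact map_mk_normalClosure_le_closure r (mem_map_of_mem μ hxN)
  obtain ⟨a, rfl⟩ := exists_of_mem_closure_range z w hw
  -- abelianizing sends `r i` to `m i • Pi.single i 1`, and these are linearly independent
  let α₀ : FreeGroup ι →* Multiplicative (ι → ℤ) :=
    FreeGroup.lift fun i => Multiplicative.ofAdd (Pi.single i 1)
  have hα₀ : ⁅N, ⊤⁆ ≤ α₀.ker :=
    (commutator_mono le_top le_rfl).trans (Abelianization.commutator_subset_ker α₀)
  let α := QuotientGroup.lift _ α₀ hα₀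
  have hαz : ∀ i, α (z i) = Multiplicative.ofAdd (Pi.single i (m i : ℤ)) := fun i => by
    simp [α, α₀, z, r, μ, ← ofAdd_nsmul, ← Pi.single_smul]
  have hαw : α.comp (center _).subtype (∏ i, z i ^ a i) =
      Multiplicative.ofAdd fun j => a j * m j := by
    rw [map_prod]
    simp only [map_zpow, MonoidHom.comp_apply, coe_subtype, hαz]
    refine Multiplicative.toAdd.injective (funext fun j => ?_)
    simp [toAdd_prod, Finset.sum_apply, Pi.single_apply, mul_comm]
  have hα : α (μ x) = 1 := Abelianization.commutator_subset_ker α₀ hxc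
  have ha : a = 0 := by
    rw [← hwx] at hα
    funext j
    simpa [hm j] using congrArg (fun v : Multiplicative (ι → ℤ) => v.toAdd j) (hαw.symm.trans hα)
  rw [← QuotientGroup.ker_mk' ⁅N, ⊤⁆, MonoidHom.mem_ker, ← hwx, ha]
  simp

end Relators

section FreeProdCyclic

def zmodPowHom {G : Type*} [Group G] {n : ℕ} (g : G) (hg : g ^ n = 1) :
    Multiplicative (ZMod n) →* G :=
  AddMonoidHom.toMultiplicativeLeft <| ZMod.lift n ⟨zmultiplesHom (Additive G) (.ofMul g), by
    rw [zmultiplesHom_apply, natCast_zsmul, ← ofMul_pow, hg, ofMul_one]⟩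

theorem zmodPowHom_ofAdd_one {G : Type*} [Group G] {n : ℕ} (g : G) (hg : g ^ n = 1) :
    zmodPowHom g hg (Multiplicative.ofAdd 1) = g := by
  simp only [zmodPowHom, AddMonoidHom.coe_toMultiplicativeLeft, Function.comp_apply,
    toAdd_ofAdd]
  rw [← Int.cast_one (R := ZMod n), ZMod.lift_coe]
  simp

variable {ι : Type*} (m : ι → ℕ)

theorem cyclicGen_pow (i : ι) : cyclicGen m i ^ m i = 1 := by
  rw [cyclicGen, ← map_pow, ← ofAdd_nsmul, nsmul_one, ZMod.natCast_self, ofAdd_zero, map_one]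

theorem closure_range_cyclicGen : closure (Set.range (cyclicGen m)) = ⊤ := by
  refine (eq_top_iff' _).mpr fun g => ?_
  induction g using Monoid.CoprodI.induction_on with
  | one => exact one_mem _
  | of i x =>
    have hx : x = Multiplicative.ofAdd 1 ^ (x.toAdd.cast : ℤ) := by
      rw [← ofAdd_zsmul, zsmul_one, ZMod.intCast_zmod_cast, ofAdd_toAdd]
    rw [hx, map_zpow]
    exact zpow_mem (subset_closure (Set.mem_range_self i)) _
  | mul x y hx hy => exact mul_mem hx hy

theorem orderOf_mk_cyclicGen (N : Subgroup (FreeProdCyclic m)) [N.Normal]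
    (hN : N ≤ commutator (FreeProdCyclic m)) (i : ι) :
    orderOf (QuotientGroup.mk' N (cyclicGen m i)) = m i := by
  classical
  let χ : FreeProdCyclic m →* Multiplicative (ZMod (m i)) :=
    Monoid.CoprodI.lift (Pi.mulSingle i (MonoidHom.id _))
  have hχ : N ≤ χ.ker := hN.trans (Abelianization.commutator_subset_ker χ)
  refine Nat.dvd_antisymm
    (orderOf_dvd_of_pow_eq_one (by rw [← map_pow, cyclicGen_pow, map_one])) ?_
  have h := orderOf_map_dvd (QuotientGroup.lift N χ hχ) (QuotientGroup.mk' N (cyclicGen m i))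
  rwa [QuotientGroup.mk'_apply, QuotientGroup.lift_mk, cyclicGen, Monoid.CoprodI.lift_of,
    Pi.mulSingle_eq_same, MonoidHom.id_apply, orderOf_ofAdd_eq_addOrderOf,
    ZMod.addOrderOf_one] at h

def cyclicPresentation : FreeGroup ι →* FreeProdCyclic m := FreeGroup.lift (cyclicGen m)

theorem cyclicPresentation_surjective : Function.Surjective (cyclicPresentation m) := by
  rw [← MonoidHom.range_eq_top, cyclicPresentation, FreeGroup.range_lift_eq_closure,
    closure_range_cyclicGen]

theorem ker_cyclicPresentation :
    (cyclicPresentation m).ker = normalClosure (Set.range fun i => FreeGroup.of i ^ m i) := by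
  set N := normalClosure (Set.range fun i => FreeGroup.of i ^ m i)
  refine le_antisymm (fun x hx => ?_) (normalClosure_le_normal ?_)
  · have hrel : ∀ i, QuotientGroup.mk' N (FreeGroup.of i) ^ m i = 1 := fun i => by
      rw [← map_pow, QuotientGroup.mk'_apply, QuotientGroup.eq_one_iff]
      exact subset_normalClosure ⟨i, rfl⟩
    let ρ : FreeProdCyclic m →* FreeGroup ι ⧸ N :=
      Monoid.CoprodI.lift fun i => zmodPowHom _ (hrel i)
    have hρ : ρ.comp (cyclicPresentation m) = QuotientGroup.mk' N :=
      FreeGroup.ext_hom _ _ fun i => by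
        simp [ρ, cyclicPresentation, cyclicGen, zmodPowHom_ofAdd_one]
    rw [← QuotientGroup.ker_mk' N, ← hρ, MonoidHom.mem_ker, MonoidHom.comp_apply,
      MonoidHom.mem_ker.mp hx, map_one]
  · rintro _ ⟨i, rfl⟩
    simp [cyclicPresentation, cyclicGen_pow]

end FreeProdCyclic

section IterComm

variable {F : Type*} [Group F] (R : Subgroup F)

theorem iterComm_le_commutator {k : ℕ} (hk : 1 ≤ k) : iterComm R k ≤ commutator F := by
  obtain ⟨j, rfl⟩ : ∃ j, k = j + 1 := ⟨k - 1, by omega⟩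
  exact commutator_mono le_top le_rfl

theorem ker_iterCommTrans [R.Normal] (k : ℕ) :
    (iterCommTrans R k).ker = map (QuotientGroup.mk' (iterComm R (k + 1))) (iterComm R k) := by
  rw [iterCommTrans, QuotientGroup.ker_map, comap_id]

end IterComm

theorem iterComm_tower_locally_unitary_schur_covers {d : ℕ} (m : Fin d → ℕ)
    (hm : ∀ i, m i ≠ 0) {G : Type*} [Group G] [Finite G]
    (π : FreeProdCyclic m →* G) (hsurj : Function.Surjective π)
    (k : ℕ) (hk : 1 ≤ k) :
    Finite (FreeProdCyclic m ⧸ iterComm π.ker k) ∧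
    iterComm π.ker k ≤ ⁅(⊤ : Subgroup (FreeProdCyclic m)), (⊤ : Subgroup (FreeProdCyclic m))⁆ ∧
    (iterCommTrans π.ker k).ker ≤
      Subgroup.center (FreeProdCyclic m ⧸ iterComm π.ker (k + 1)) ∧
    (iterCommTrans π.ker k).ker ≤
      ⁅(⊤ : Subgroup (FreeProdCyclic m ⧸ iterComm π.ker (k + 1))),
        (⊤ : Subgroup (FreeProdCyclic m ⧸ iterComm π.ker (k + 1)))⁆ ∧
    Nonempty (↥(iterCommTrans π.ker k).ker ≃* H2Z (FreeProdCyclic m ⧸ iterComm π.ker k)) ∧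
    (∀ i, orderOf (QuotientGroup.mk' (iterComm π.ker (k + 1)) (cyclicGen m i)) = m i) ∧
    (∀ i, orderOf (QuotientGroup.mk' (iterComm π.ker k) (cyclicGen m i)) = m i) := by
  have htors : ∀ x ∈ Set.range (cyclicGen m), IsOfFinOrder x := by
    rintro _ ⟨i, rfl⟩
    exact isOfFinOrder_iff_pow_eq_one.mpr ⟨m i, Nat.pos_of_ne_zero (hm i), cyclicGen_pow m i⟩
  have : Finite (FreeProdCyclic m ⧸ π.ker) :=
    .of_equiv G (QuotientGroup.quotientKerEquivOfSurjective π hsurj).symm.toEquiv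
  have hle : ∀ {j}, 1 ≤ j → iterComm π.ker j ≤ commutator (FreeProdCyclic m) :=
    iterComm_le_commutator π.ker
  rw [ker_iterCommTrans]
  refine ⟨finite_quotient_iterComm (Set.finite_range _) (closure_range_cyclicGen m) htors _ k,
    hle hk, map_mk_le_center _, ?_, ?_, orderOf_mk_cyclicGen m _ (hle (by omega)),
    orderOf_mk_cyclicGen m _ (hle hk)⟩
  · rw [← map_top_of_surjective _ (QuotientGroup.mk'_surjective _), ← map_commutator]
    exact map_mono (hle hk)
  · exact nonempty_map_mk_equiv_H2Z (cyclicPresentation_surjective m)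
      (ker_cyclicPresentation m ▸ commutator_inf_normalClosure_pow_le hm) (hle hk)
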